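/- arXiv:1709.07907 — 2 statements merged into one kernel-verified Lean document; each statement's English description precedes it below -/
import Mathlib

section
/- If X is a finite simple graph on n vertices whose adjacency matrix has n distinct eigenvalues, then the rank of the average mixing matrix M̂(X) equals the rank of the coefficient matrix of X. -/
/-!
The `n` nonzero idempotents `E r` sum to `I`, and the trace of an idempotent is its rank, so
each `E r` has rank one. Let `N` be the matrix whose `r`-th column is the diagonal of `E r`.
A symmetric rank-one matrix satisfies `E u w ^ 2 = E u u * E w w`, so the average mixing matrix
is `N * Nᵀ`, which has the rank of `N`. On the other side,
`adj (tI - A) = ∑ r, (∏_{s ≠ r} (t - θ s)) • E r`, and the diagonal entries of `adj (tI - A)`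
are the characteristic polynomials of the vertex-deleted subgraphs, so the coefficient matrix is
`N * B`, where `B` lists the coefficients of the polynomials `∏_{s ≠ r} (t - θ s)`. Evaluating
at the `θ`'s shows that these are linearly independent, so `B` is invertible and the
coefficient matrix also has the rank of `N`.
-/

open scoped Matrix

/-- The coefficient matrix of a graph with adjacency matrix `A`: its `(u, r)` entry is the
coefficient of `t^r` (i.e. of `t^{(r+1)-1}`) in the characteristic polynomial of the matrix
obtained from `A` by deleting the row and column of the vertex `u`. -/
noncomputable def coeffMatrix {V : Type*} [Fintype V] [DecidableEq V]
    (A : Matrix V V ℝ) : Matrix V (Fin (Fintype.card V)) ℝ :=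
  Matrix.of fun u r =>
    (Matrix.charpoly (A.submatrix (Subtype.val : {x : V // x ≠ u} → V)
      (Subtype.val : {x : V // x ≠ u} → V))).coeff (r : ℕ)

open Polynomial

namespace Matrix

section Rank

variable {K n : Type*} [Field K] [Fintype n] [DecidableEq n]

theorem rank_pos_of_ne_zero {m : Type*} {M : Matrix m n K} (hM : M ≠ 0) : 0 < M.rank := by
  rw [Nat.pos_iff_ne_zero, rank, Ne, Submodule.finrank_eq_zero, LinearMap.range_eq_bot,
    ← toLin'_apply', map_eq_zero_iff _ toLin'.injective]
  exact hM

theorem trace_eq_rank_of_isIdempotentElem {M : Matrix n n K} (hM : IsIdempotentElem M) :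
    M.trace = M.rank := by
  have hM' : IsIdempotentElem (toLin' M) := hM.map toLinAlgEquiv'
  rw [← trace_toLin'_eq, (LinearMap.IsIdempotentElem.isProj_range _ hM').trace, rank,
    ← toLin'_apply']

theorem rank_eq_one_of_sum_eq_one [CharZero K] {ι : Type*} [Fintype ι] {E : ι → Matrix n n K}
    (hcard : Fintype.card ι = Fintype.card n) (hidem : ∀ r, IsIdempotentElem (E r))
    (hne : ∀ r, E r ≠ 0) (hsum : ∑ r, E r = 1) (r : ι) : (E r).rank = 1 := by
  have htotal : ∑ _r : ι, 1 = ∑ r, (E r).rank := by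
    rw [Finset.sum_const, Finset.card_univ, hcard, smul_eq_mul, mul_one]
    exact_mod_cast calc (Fintype.card n : K) = trace (∑ r, E r) := by rw [hsum, trace_one]
      _ = ∑ r, ((E r).rank : K) := by
        rw [trace_sum]
        exact Finset.sum_congr rfl fun r _ => trace_eq_rank_of_isIdempotentElem (hidem r)
  exact ((Finset.sum_eq_sum_iff_of_le fun r _ => rank_pos_of_ne_zero (hne r)).mp htotal r
    (Finset.mem_univ r)).symm

theorem mul_apply_eq_of_rank_le_one {m : Type*} {M : Matrix m n K} (hM : M.rank ≤ 1)
    (i k : m) (j l : n) : M i j * M k l = M i l * M k j := by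
  obtain ⟨v, hv⟩ := finrank_le_one_iff.mp hM
  have hcol : ∀ j, ∃ c : K, ∀ i, M i j = c * v.1 i := fun j => by
    obtain ⟨c, hc⟩ := hv ⟨M.col j, M.mulVec_single_one j ▸ LinearMap.mem_range_self _ _⟩
    exact ⟨c, fun i => congrFun (congrArg Subtype.val hc.symm) i⟩
  obtain ⟨cj, hj⟩ := hcol j
  obtain ⟨cl, hl⟩ := hcol l
  rw [hj, hj, hl, hl]
  ring

def diagColumns {ι : Type*} (E : ι → Matrix n n K) : Matrix n ι K :=
  of fun u r => E r u u

theorem sum_hadamard_self_eq_diagColumns_mul_transpose {ι : Type*} [Fintype ι]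
    {E : ι → Matrix n n K} (hsymm : ∀ r, (E r).IsSymm) (hrank : ∀ r, (E r).rank ≤ 1) :
    ∑ r, E r ⊙ E r = diagColumns E * (diagColumns E)ᵀ := by
  ext u w
  rw [sum_apply, mul_apply]
  refine Finset.sum_congr rfl fun r _ => ?_
  have hminor := mul_apply_eq_of_rank_le_one (hrank r) u w w u
  rw [(hsymm r).apply u w] at hminor
  exact hminor

end Rank

section OrthogonalIdempotents

variable {R n ι : Type*} [CommRing R] [Fintype n] [DecidableEq n] [Fintype ι]
  {E : ι → Matrix n n R}

theorem charmatrix_sum_smul (hsum : ∑ r, E r = 1) (θ : ι → R) :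
    charmatrix (∑ r, θ r • E r) = ∑ r, (X - C (θ r)) • (E r).map C := by
  ext i j
  have hone : ∑ r, C (E r i j) = C ((1 : Matrix n n R) i j) := by
    rw [← map_sum, ← sum_apply, hsum]
  simp only [charmatrix_apply, sum_apply, smul_apply, map_apply, smul_eq_mul, sub_mul,
    Finset.sum_sub_distrib, ← Finset.mul_sum, hone, ← C_mul, ← map_sum]
  rcases eq_or_ne i j with rfl | hij <;> simp [*]

variable [DecidableEq ι]

theorem sum_smul_mul (horth : ∀ r s, E r * E s = if r = s then E r else 0) (f : ι → R) (r : ι) :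
    (∑ s, f s • E s) * E r = f r • E r := by
  simp [Finset.sum_mul, horth]

theorem sum_smul_mul_sum_smul (horth : ∀ r s, E r * E s = if r = s then E r else 0)
    (f g : ι → R) : (∑ r, f r • E r) * (∑ r, g r • E r) = ∑ r, (f r * g r) • E r := by
  simp_rw [Finset.mul_sum, mul_smul_comm, sum_smul_mul horth, smul_smul, mul_comm]

theorem adjugate_sum_smul [IsDomain R] (horth : ∀ r s, E r * E s = if r = s then E r else 0)
    (hsum : ∑ r, E r = 1) {f : ι → R} (hf : ∏ r, f r ≠ 0)
    (hdet : (∑ r, f r • E r).det = ∏ r, f r) :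
    (∑ r, f r • E r).adjugate = ∑ s, (∏ t ∈ Finset.univ.erase s, f t) • E s := by
  set M := ∑ r, f r • E r
  set P := ∑ s, (∏ t ∈ Finset.univ.erase s, f t) • E s
  have hMP : M * P = (∏ r, f r) • 1 := by
    simp_rw [M, P, sum_smul_mul_sum_smul horth, Finset.mul_prod_erase _ _ (Finset.mem_univ _),
      ← Finset.smul_sum, hsum]
  apply smul_right_injective (Matrix n n R) hf
  calc (∏ r, f r) • M.adjugate = M.adjugate * (M * P) := by rw [hMP, mul_smul_comm, mul_one]
    _ = (∏ r, f r) • P := by rw [← Matrix.mul_assoc, adjugate_mul, hdet, smul_mul, one_mul]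

end OrthogonalIdempotents

section SpectralDecomposition

variable {K n ι : Type*} [Field K] [Fintype n] [DecidableEq n] [Fintype ι] [DecidableEq ι]
  {E : ι → Matrix n n K} {θ : ι → K}

theorem charpoly_sum_smul (hcard : Fintype.card ι = Fintype.card n)
    (horth : ∀ r s, E r * E s = if r = s then E r else 0) (hne : ∀ r, E r ≠ 0)
    (hθ : Function.Injective θ) :
    (∑ r, θ r • E r).charpoly = Lagrange.nodal Finset.univ θ := by
  have hroot : ∀ r, (∑ s, θ s • E s).charpoly.IsRoot (θ r) := fun r => by
    rw [← mem_spectrum_iff_isRoot_charpoly, spectrum.mem_iff]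
    intro hunit
    refine hne r ((hunit.mul_right_eq_zero).mp ?_)
    rw [sub_mul, sum_smul_mul horth, Algebra.algebraMap_eq_smul_one, smul_mul, one_mul, sub_self]
  refine eq_of_monic_of_dvd_of_natDegree_le Lagrange.nodal_monic (charpoly_monic _) ?_ ?_
  · exact Finset.prod_dvd_of_coprime ((pairwise_coprime_X_sub_C hθ).set_pairwise _)
      fun r _ => dvd_iff_isRoot.mpr (hroot r)
  · rw [charpoly_natDegree_eq_dim, Lagrange.natDegree_nodal, Finset.card_univ, hcard]

theorem adjugate_charmatrix_sum_smul (hcard : Fintype.card ι = Fintype.card n)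
    (horth : ∀ r s, E r * E s = if r = s then E r else 0) (hne : ∀ r, E r ≠ 0)
    (hsum : ∑ r, E r = 1) (hθ : Function.Injective θ) :
    (charmatrix (∑ r, θ r • E r)).adjugate =
      ∑ s, Lagrange.nodal (Finset.univ.erase s) θ • (E s).map C := by
  have hmap_orth : ∀ r s, (E r).map C * (E s).map C = if r = s then (E r).map C else 0 :=
    fun r s => by rw [← Matrix.map_mul, horth]; split_ifs <;> simp
  have hmap_sum : ∑ r, (E r).map (C : K → K[X]) = 1 := by
    simp_rw [← RingHom.mapMatrix_apply, ← map_sum, hsum, map_one]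
  have hdet := charpoly_sum_smul hcard horth hne hθ
  rw [charpoly, charmatrix_sum_smul hsum, Lagrange.nodal_eq] at hdet
  rw [charmatrix_sum_smul hsum, adjugate_sum_smul hmap_orth hmap_sum _ hdet]
  · simp_rw [Lagrange.nodal_eq]
  · rw [← Lagrange.nodal_eq]
    exact Lagrange.nodal_ne_zero

end SpectralDecomposition

section CoefficientMatrix

variable {R n : Type*} [CommRing R] [Fintype n] [DecidableEq n]

theorem charmatrix_submatrix {m : Type*} [Fintype m] [DecidableEq m] (A : Matrix n n R)
    {e : m → n} (he : Function.Injective e) :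
    charmatrix (A.submatrix e e) = (charmatrix A).submatrix e e := by
  ext i j
  rcases eq_or_ne i j with rfl | hij
  · simp
  · simp [hij, he.ne hij]

theorem adjugate_apply_self (A : Matrix n n R) (u : n) :
    A.adjugate u u = (A.submatrix (Subtype.val : {x // x ≠ u} → n) Subtype.val).det := by
  have hrows : A.updateRow u (Pi.single u 1) =
      of ((Finset.univ.erase u).piecewise A.row (1 : Matrix n n R).row) := by
    ext i j
    by_cases hi : i = u
    · subst hi; simp [Pi.single_apply, one_apply, eq_comm]
    · simp [hi]
  rw [adjugate_apply, hrows, det_piecewise_one_eq_submatrix_det]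
  exact (det_submatrix_equiv_self (Equiv.subtypeEquivRight fun x => by simp) _).symm

theorem charpoly_submatrix_ne (A : Matrix n n R) (u : n) :
    (A.submatrix (Subtype.val : {x // x ≠ u} → n) Subtype.val).charpoly =
      (charmatrix A).adjugate u u := by
  rw [charpoly, charmatrix_submatrix A Subtype.val_injective, adjugate_apply_self]

theorem vandermonde_mul_coeff_eq_eval {k : ℕ} (v : Fin k → R) (p : Fin k → R[X])
    (hp : ∀ s, (p s).natDegree < k) :
    vandermonde v * (of fun s (r : Fin k) => (p s).coeff r)ᵀ = of fun i s => (p s).eval (v i) := by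
  ext i s
  rw [mul_apply, of_apply, eval_eq_sum_range' (hp s), ← Fin.sum_univ_eq_sum_range]
  simp [vandermonde_apply, mul_comm]

theorem isUnit_det_coeff_nodal_erase {K : Type*} [Field K] {k : ℕ} {θ : Fin k → K}
    (hθ : Function.Injective θ) :
    IsUnit (of fun (s r : Fin k) => (Lagrange.nodal (Finset.univ.erase s) θ).coeff r).det := by
  have hdeg : ∀ s : Fin k, (Lagrange.nodal (Finset.univ.erase s) θ).natDegree < k := fun s => by
    rw [Lagrange.natDegree_nodal, Finset.card_erase_of_mem (Finset.mem_univ s), Finset.card_fin]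
    exact Nat.sub_lt s.pos one_pos
  set B := of fun (s r : Fin k) => (Lagrange.nodal (Finset.univ.erase s) θ).coeff r
  have hdiag : vandermonde θ * Bᵀ =
      diagonal fun s => (Lagrange.nodal (Finset.univ.erase s) θ).eval (θ s) := by
    rw [vandermonde_mul_coeff_eq_eval θ _ hdeg]
    ext i s
    rcases eq_or_ne i s with rfl | his
    · simp
    · simp [his, Lagrange.eval_nodal_at_node (Finset.mem_erase.mpr ⟨his, Finset.mem_univ i⟩)]
  have hdet := congrArg det hdiag
  rw [det_mul, det_transpose, det_diagonal] at hdet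
  refine isUnit_iff_ne_zero.mpr fun h0 => ?_
  rw [h0, mul_zero] at hdet
  refine Finset.prod_ne_zero_iff.mpr (fun s _ => ?_) hdet.symm
  exact Lagrange.eval_nodal_not_at_node fun t ht => hθ.ne (Finset.ne_of_mem_erase ht).symm

end CoefficientMatrix

end Matrix

open Matrix in
theorem coeffMatrix_sum_smul {V ι : Type*} [Fintype V] [DecidableEq V] [Fintype ι]
    [DecidableEq ι] {E : ι → Matrix V V ℝ} {θ : ι → ℝ} (hcard : Fintype.card ι = Fintype.card V)
    (horth : ∀ r s, E r * E s = if r = s then E r else 0) (hne : ∀ r, E r ≠ 0)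
    (hsum : ∑ r, E r = 1) (hθ : Function.Injective θ) :
    coeffMatrix (∑ r, θ r • E r) = diagColumns E *
      of fun s (r : Fin (Fintype.card V)) => (Lagrange.nodal (Finset.univ.erase s) θ).coeff r := by
  ext u r
  simp only [coeffMatrix, of_apply, charpoly_submatrix_ne,
    adjugate_charmatrix_sum_smul hcard horth hne hsum hθ, Matrix.sum_apply, Matrix.smul_apply,
    map_apply, smul_eq_mul, finsetSum_coeff, coeff_mul_C, mul_apply, diagColumns, mul_comm]

theorem rank_avgMixing_eq_rank_coeffMatrix_general {V : Type*} [Fintype V] [DecidableEq V]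
    (A : Matrix V V ℝ)
    (θ : Fin (Fintype.card V) → ℝ) (hθ : Function.Injective θ)
    (E : Fin (Fintype.card V) → Matrix V V ℝ)
    (hsymm : ∀ r, (E r).IsSymm)
    (horth : ∀ r s, E r * E s = if r = s then E r else 0)
    (hne : ∀ r, E r ≠ 0)
    (hsum : ∑ r, E r = 1)
    (hdecomp : A = ∑ r, θ r • E r) :
    (∑ r, E r ⊙ E r).rank = (coeffMatrix A).rank := by
  subst hdecomp
  have hidem : ∀ r, IsIdempotentElem (E r) := fun r => (horth r r).trans (if_pos rfl)
  have hrank := Matrix.rank_eq_one_of_sum_eq_one (Fintype.card_fin _) hidem hne hsum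
  rw [Matrix.sum_hadamard_self_eq_diagColumns_mul_transpose hsymm fun r => (hrank r).le,
    Matrix.rank_self_mul_transpose, coeffMatrix_sum_smul (Fintype.card_fin _) horth hne hsum hθ,
    Matrix.rank_mul_eq_left_of_isUnit_det _ _ (Matrix.isUnit_det_coeff_nodal_erase hθ)]

/-- If a graph `X` on `n` vertices has `n` distinct eigenvalues, then the
rank of its average mixing matrix equals the rank of its coefficient matrix. -/
theorem rank_avgMixing_eq_rank_coeffMatrix {V : Type*} [Fintype V] [DecidableEq V]
    (G : SimpleGraph V) [DecidableRel G.Adj]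
    (A : Matrix V V ℝ) (hA : A = G.adjMatrix ℝ)
    (θ : Fin (Fintype.card V) → ℝ) (hθ : Function.Injective θ)
    (E : Fin (Fintype.card V) → Matrix V V ℝ)
    (hsymm : ∀ r, (E r).IsSymm)
    (horth : ∀ r s, E r * E s = if r = s then E r else 0)
    (hne : ∀ r, E r ≠ 0)
    (hsum : ∑ r, E r = 1)
    (hdecomp : A = ∑ r, θ r • E r) :
    (∑ r, E r ⊙ E r).rank = (coeffMatrix A).rank :=
  rank_avgMixing_eq_rank_coeffMatrix_general A θ hθ E hsymm horth hne hsum hdecomp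
end

section
/- If T is a finite tree on at least 3 vertices whose adjacency matrix has |V(T)| distinct eigenvalues, then T has a leaf adjacent to a vertex of degree two; that is, there exist adjacent vertices u and v with deg(u) = 1 and deg(v) = 2. -/
/-!
If no leaf of `T` is adjacent to a vertex of degree two, then (for `|V| ≥ 3`) every vertex
adjacent to a leaf has degree at least three, and the degree sum `∑ (deg v - 2) = -2` of a tree
forces at least two more leaves than there are vertices adjacent to leaves. By pigeonhole we find
two pairs of leaves `{a, b}` and `{c, d}`, each sharing its neighbour, with `a ∉ {c, d}`. Then
`e_a - e_b` and `e_c - e_d` are linearly independent vectors in the kernel of the adjacency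
matrix, whereas a spectral decomposition into `|V|` nonzero orthogonal idempotents forces each
of them to have rank one (rank equals trace), so every eigenspace is at most one-dimensional.
-/

open Finset Module
open scoped Matrix

lemma Finset.exists_two_collisions_of_card_image_add_two_le {α β : Type*} [DecidableEq α]
    [DecidableEq β] {s : Finset α} {f : α → β} (hs : #(s.image f) + 2 ≤ #s) :
    ∃ a ∈ s, ∃ b ∈ s, ∃ c ∈ s, ∃ d ∈ s,
      a ≠ b ∧ c ≠ d ∧ a ≠ c ∧ a ≠ d ∧ f a = f b ∧ f c = f d := by
  have hmaps : ∀ t ⊆ s, Set.MapsTo f t (s.image f) := fun t ht x hx =>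
    mem_coe.2 (mem_image_of_mem f (ht hx))
  obtain ⟨a, ha, b, hb, hab, hfab⟩ :=
    exists_ne_map_eq_of_card_lt_of_maps_to (by omega) (hmaps s subset_rfl)
  obtain ⟨c, hc, d, hd, hcd, hfcd⟩ := exists_ne_map_eq_of_card_lt_of_maps_to
    (by rw [card_erase_of_mem ha]; omega) (hmaps _ (erase_subset a s))
  exact ⟨a, ha, b, hb, c, mem_of_mem_erase hc, d, mem_of_mem_erase hd, hab, hcd,
    (ne_of_mem_erase hc).symm, (ne_of_mem_erase hd).symm, hfab, hfcd⟩

lemma linearIndependent_single_sub_single_pair {K V : Type*} [Field K] [DecidableEq V]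
    {a b c d : V} (hab : a ≠ b) (hcd : c ≠ d) (hac : a ≠ c) (had : a ≠ d) :
    LinearIndependent K
      ![(Pi.single a 1 - Pi.single b 1 : V → K), Pi.single c 1 - Pi.single d 1] := by
  rw [LinearIndependent.pair_iff]
  intro s t hst
  have hs := congrFun hst a
  simp [hab, hac, had] at hs
  have ht := congrFun hst c
  simp [hs, hcd] at ht
  exact ⟨hs, ht⟩

lemma Submodule.not_linearIndependent_pair_of_finrank_le_one {K M : Type*} [Field K]
    [AddCommGroup M] [Module K M] {p : Submodule K M} [FiniteDimensional K p]
    (hp : finrank K p ≤ 1) {x y : M} (hx : x ∈ p) (hy : y ∈ p) :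
    ¬LinearIndependent K ![x, y] := fun hxy => by
  have hspan : span K (Set.range ![x, y]) ≤ p := by
    rw [span_le, Set.range_subset_iff, Fin.forall_fin_two]
    exact ⟨hx, hy⟩
  have := (finrank_mono hspan).trans hp
  rw [finrank_span_eq_card hxy, Fintype.card_fin] at this
  omega

namespace Matrix

variable {K ι n : Type*} [Field K] [Fintype ι] [Fintype n] [DecidableEq n]

lemma trace_eq_rank_of_isIdempotentElem_s16 {P : Matrix n n K} (hP : IsIdempotentElem P) :
    P.trace = P.rank := by
  rw [← trace_toLin'_eq, rank, ← toLin'_apply']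
  exact (LinearMap.IsIdempotentElem.isProj_range _ (hP.map toLinAlgEquiv')).trace

lemma rank_eq_one_of_completeOrthogonalIdempotents [CharZero K] {E : ι → Matrix n n K}
    (hE : CompleteOrthogonalIdempotents E) (hne : ∀ r, E r ≠ 0)
    (hcard : Fintype.card ι = Fintype.card n) (r : ι) : (E r).rank = 1 := by
  have hsum : ∑ _ : ι, 1 = ∑ r, (E r).rank := by
    apply Nat.cast_injective (R := K)
    push_cast
    simp_rw [← trace_eq_rank_of_isIdempotentElem_s16 (hE.idem _)]
    rw [← trace_sum, hE.complete, trace_one, sum_const, card_univ, hcard, nsmul_one]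
  refine ((sum_eq_sum_iff_of_le fun r _ => ?_).1 hsum r (mem_univ r)).symm
  rw [Nat.one_le_iff_ne_zero, rank, Ne, Submodule.finrank_eq_zero, LinearMap.range_eq_bot]
  simpa [← toLin'_apply'] using hne r

variable {E : ι → Matrix n n K} {θ : ι → K} {A : Matrix n n K}

lemma mul_eq_smul_of_eq_sum_smul (hE : CompleteOrthogonalIdempotents E)
    (hA : A = ∑ r, θ r • E r) (r : ι) : E r * A = θ r • E r := by
  classical
  simp [hA, Finset.mul_sum, hE.mul_eq]

lemma mulVec_eq_zero_of_mulVec_eq_smul (hE : CompleteOrthogonalIdempotents E)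
    (hA : A = ∑ r, θ r • E r) {μ : K} {x : n → K} (hx : A *ᵥ x = μ • x) {r : ι}
    (hr : θ r ≠ μ) : E r *ᵥ x = 0 := by
  have : (θ r - μ) • (E r *ᵥ x) = 0 := by
    rw [sub_smul, ← smul_mulVec, ← mul_eq_smul_of_eq_sum_smul hE hA, ← mulVec_mulVec, hx,
      mulVec_smul, sub_self]
  exact (smul_eq_zero.1 this).resolve_left (sub_ne_zero.2 hr)

lemma sum_mulVec_eq_self (hE : CompleteOrthogonalIdempotents E) (x : n → K) :
    ∑ r, E r *ᵥ x = x := by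
  rw [← sum_mulVec, hE.complete, one_mulVec]

lemma finrank_eigenspace_le_one_of_eq_sum_smul [CharZero K]
    (hE : CompleteOrthogonalIdempotents E) (hne : ∀ r, E r ≠ 0)
    (hcard : Fintype.card ι = Fintype.card n) (hθ : Function.Injective θ)
    (hA : A = ∑ r, θ r • E r) (μ : K) :
    finrank K (Module.End.eigenspace (toLin' A) μ) ≤ 1 := by
  by_cases hμ : ∃ r, θ r = μ
  · obtain ⟨r, rfl⟩ := hμ
    have hle : Module.End.eigenspace (toLin' A) (θ r) ≤ LinearMap.range (toLin' (E r)) := by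
      intro x hx
      rw [Module.End.mem_eigenspace_iff, toLin'_apply] at hx
      refine ⟨x, ?_⟩
      rw [toLin'_apply, ← sum_eq_single (f := (E · *ᵥ x)) r (fun s _ hs => ?_)
        (absurd (mem_univ r)), sum_mulVec_eq_self hE]
      exact mulVec_eq_zero_of_mulVec_eq_smul hE hA hx (hθ.ne hs)
    calc finrank K (Module.End.eigenspace (toLin' A) (θ r))
        ≤ (E r).rank := Submodule.finrank_mono hle
      _ = 1 := rank_eq_one_of_completeOrthogonalIdempotents hE hne hcard r
  · push Not at hμ
    suffices Module.End.eigenspace (toLin' A) μ = ⊥ by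
      rw [this, finrank_bot]
      exact zero_le_one
    refine (Submodule.eq_bot_iff _).2 fun x hx => ?_
    rw [Module.End.mem_eigenspace_iff, toLin'_apply] at hx
    rw [← sum_mulVec_eq_self hE x]
    exact sum_eq_zero fun r _ => mulVec_eq_zero_of_mulVec_eq_smul hE hA hx (hμ r)

end Matrix

namespace SimpleGraph

variable {V : Type*} [Fintype V] {G : SimpleGraph V} [DecidableRel G.Adj]

lemma adjMatrix_mulVec_single_sub_single [DecidableEq V] {R : Type*} [NonAssocRing R] {a b : V}
    (hab : G.neighborSet a = G.neighborSet b) :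
    G.adjMatrix R *ᵥ (Pi.single a 1 - Pi.single b 1) = 0 := by
  ext u
  have := Set.ext_iff.1 hab u
  simp only [mem_neighborSet, G.adj_comm a, G.adj_comm b] at this
  simp [this]

lemma neighborSet_eq_singleton_of_degree_eq_one {u v : V} (huv : G.Adj u v)
    (hu : G.degree u = 1) : G.neighborSet u = {v} := by
  obtain ⟨w, -, hw⟩ := degree_eq_one_iff_existsUnique_adj.1 hu
  ext x
  simp only [mem_neighborSet, Set.mem_singleton_iff]
  exact ⟨fun hx => (hw x hx).trans (hw v huv).symm, fun hx => hx ▸ huv⟩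

lemma Connected.card_le_two_of_adj_of_degree_eq_one (hG : G.Connected) {u v : V}
    (huv : G.Adj u v) (hu : G.degree u = 1) (hv : G.degree v = 1) : Fintype.card V ≤ 2 := by
  classical
  suffices ∀ w, w = u ∨ w = v from
    (card_le_card fun w _ => by simpa using this w).trans (card_le_two (a := u) (b := v))
  intro w
  by_contra! hw
  obtain ⟨p, hp⟩ := hG.preconnected.exists_isPath w u
  -- the last step of a path into the leaf `u` comes from `v`, itself a leaf, so `v` is interior
  have hpen : p.penultimate = v := by
    have h := (p.adj_penultimate (Walk.not_nil_of_ne hw.1)).symm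
    rwa [← mem_neighborSet, neighborSet_eq_singleton_of_degree_eq_one huv hu] at h
  refine hp.isTrail.not_mem_support_of_subsingleton_neighborSet hw.2.symm huv.ne.symm ?_
    (hpen ▸ p.getVert_mem_support _)
  rw [neighborSet_eq_singleton_of_degree_eq_one huv.symm hv]
  exact Set.subsingleton_singleton

lemma IsTree.card_add_two_le_card_degree_eq_one [Nontrivial V] (hG : G.IsTree) (S : Finset V)
    (hS : ∀ v ∈ S, 3 ≤ G.degree v) : #S + 2 ≤ #{v | G.degree v = 1} := by
  classical
  have hsum : ∑ v, ((G.degree v : ℤ) - 2) = -2 := by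
    have h := hG.card_edgeFinset
    rw [sum_sub_distrib, ← Nat.cast_sum, sum_degrees_eq_twice_card_edges, sum_const, card_univ]
    push_cast [← h]
    ring
  have hle : ∑ v, ((if v ∈ S then 1 else 0) - (if G.degree v = 1 then 1 else 0) : ℤ) ≤
      ∑ v, ((G.degree v : ℤ) - 2) := by
    refine sum_le_sum fun v _ => ?_
    have := hG.connected.preconnected.degree_pos_of_nontrivial v
    by_cases hvS : v ∈ S
    · have := hS v hvS
      split_ifs <;> omega
    · split_ifs <;> omega
  rw [hsum, sum_sub_distrib, sum_boole, sum_boole, filter_mem_eq_inter, univ_inter] at hle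
  omega

lemma IsTree.exists_twin_leaf_pairs [DecidableEq V] (hG : G.IsTree) (hcard : 3 ≤ Fintype.card V)
    (h : ∀ u v, G.Adj u v → G.degree u = 1 → G.degree v ≠ 2) :
    ∃ a b c d, a ≠ b ∧ c ≠ d ∧ a ≠ c ∧ a ≠ d ∧
      G.neighborSet a = G.neighborSet b ∧ G.neighborSet c = G.neighborSet d := by
  have : Nontrivial V := Fintype.one_lt_card_iff_nontrivial.1 (by omega)
  choose f hf using fun v =>
    (G.degree_pos_iff_exists_adj v).1 (hG.connected.preconnected.degree_pos_of_nontrivial v)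
  set L : Finset V := {v | G.degree v = 1} with hL
  have hLf : ∀ x ∈ L, G.neighborSet x = {f x} := fun x hx =>
    neighborSet_eq_singleton_of_degree_eq_one (hf x) (by simpa [hL] using hx)
  have hS : ∀ v ∈ L.image f, 3 ≤ G.degree v := by
    simp only [mem_image, forall_exists_index, and_imp]
    rintro _ x hx rfl
    have hx1 : G.degree x = 1 := by simpa [hL] using hx
    have h1 : G.degree (f x) ≠ 1 := fun h1 => by
      have := hG.connected.card_le_two_of_adj_of_degree_eq_one (hf x) hx1 h1
      omega
    have h2 := h x (f x) (hf x) hx1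
    have := (hf x).degree_pos_right
    omega
  obtain ⟨a, ha, b, hb, c, hc, d, hd, hab, hcd, hac, had, hfab, hfcd⟩ :=
    exists_two_collisions_of_card_image_add_two_le (hG.card_add_two_le_card_degree_eq_one _ hS)
  exact ⟨a, b, c, d, hab, hcd, hac, had, by rw [hLf a ha, hLf b hb, hfab],
    by rw [hLf c hc, hLf d hd, hfcd]⟩

end SimpleGraph

theorem tree_simple_eigenvalues_leaf_adj_degree_two_general {V : Type*} [Fintype V] [DecidableEq V]
    (T : SimpleGraph V) [DecidableRel T.Adj] (hT : T.IsTree)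
    (hcard : 3 ≤ Fintype.card V)
    (θ : Fin (Fintype.card V) → ℝ) (hθ : Function.Injective θ)
    (E : Fin (Fintype.card V) → Matrix V V ℝ)
    (horth : ∀ r s, E r * E s = if r = s then E r else 0)
    (hne : ∀ r, E r ≠ 0)
    (hsum : ∑ r, E r = 1)
    (hdecomp : T.adjMatrix ℝ = ∑ r, θ r • E r) :
    ∃ u v : V, T.Adj u v ∧ T.degree u = 1 ∧ T.degree v = 2 := by
  by_contra! hcon
  obtain ⟨a, b, c, d, hab, hcd, hac, had, hNab, hNcd⟩ := hT.exists_twin_leaf_pairs hcard hcon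
  have hE : CompleteOrthogonalIdempotents E :=
    CompleteOrthogonalIdempotents.iff_ortho_complete.2
      ⟨fun r s hrs => by simpa [hrs] using horth r s, hsum⟩
  have hker : ∀ {x y : V}, T.neighborSet x = T.neighborSet y →
      Pi.single x 1 - Pi.single y 1 ∈ Module.End.eigenspace (Matrix.toLin' (T.adjMatrix ℝ)) 0 :=
    fun hxy => by
      rw [Module.End.mem_eigenspace_iff, Matrix.toLin'_apply, zero_smul,
        SimpleGraph.adjMatrix_mulVec_single_sub_single hxy]
  exact Submodule.not_linearIndependent_pair_of_finrank_le_one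
    (Matrix.finrank_eigenspace_le_one_of_eq_sum_smul hE hne (Fintype.card_fin _) hθ hdecomp 0)
    (hker hNab) (hker hNcd) (linearIndependent_single_sub_single_pair hab hcd hac had)

/-- A tree on at least `3` vertices with simple eigenvalues has a leaf
adjacent to a vertex of degree two. -/
theorem tree_simple_eigenvalues_leaf_adj_degree_two {V : Type*} [Fintype V] [DecidableEq V]
    (T : SimpleGraph V) [DecidableRel T.Adj] (hT : T.IsTree)
    (hcard : 3 ≤ Fintype.card V)
    (θ : Fin (Fintype.card V) → ℝ) (hθ : Function.Injective θ)
    (E : Fin (Fintype.card V) → Matrix V V ℝ)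
    (hsymm : ∀ r, (E r).IsSymm)
    (horth : ∀ r s, E r * E s = if r = s then E r else 0)
    (hne : ∀ r, E r ≠ 0)
    (hsum : ∑ r, E r = 1)
    (hdecomp : T.adjMatrix ℝ = ∑ r, θ r • E r) :
    ∃ u v : V, T.Adj u v ∧ T.degree u = 1 ∧ T.degree v = 2 :=
  tree_simple_eigenvalues_leaf_adj_degree_two_general T hT hcard θ hθ E horth hne hsum hdecomp
end
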